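/- arXiv:2202.13292 — 8 statements merged into one kernel-verified Lean document; each statement's English description precedes it below -/
import Mathlib

section
/- Let n ≥ 1, let J be the standard 2n×2n symplectic matrix, and let A, M be real 2n×2n matrices with M symmetric and positive definite, such that the complex Hermitian matrix M + i·(J − AᵀJA) is positive semidefinite. If f : ℝ^{2n} → ℂ is such that its twisted kernel K_f(ξ,η) = f(η−ξ)·exp(i·ξᵀJη) is a positive definite kernel, then the function g(ξ) = exp(−(1/2)·ξᵀMξ)·f(Aξ) also has a positive definite twisted kernel K_g(ξ,η) = g(η−ξ)·exp(i·ξᵀJη). -/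
noncomputable section
open Matrix
open scoped ComplexOrder

/-- A positive definite kernel on `ℝ^d` with complex values: all finite Gram-type
sums are nonnegative real numbers (nonnegative in the complex order). -/
def PosDefKernel {d : ℕ} (K : (Fin d → ℝ) → (Fin d → ℝ) → ℂ) : Prop :=
  ∀ (m : ℕ) (ξ : Fin m → Fin d → ℝ) (c : Fin m → ℂ),
    0 ≤ ∑ j, ∑ k, (starRingEnd ℂ) (c j) * c k * K (ξ j) (ξ k)
/-- The standard `2n × 2n` symplectic matrix: block diagonal with `n` copies of
the block `((0,1),(-1,0))`. -/
def sympJ (n : ℕ) : Matrix (Fin (2*n)) (Fin (2*n)) ℝ :=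
  Matrix.of fun j k =>
    if j.val % 2 = 0 ∧ k.val = j.val + 1 then 1
    else if k.val % 2 = 0 ∧ j.val = k.val + 1 then -1 else 0
/-- The twisted kernel `K_f(ξ,η) = f(η-ξ) · exp(i ξᵀ J η)` of `f : ℝ^{2n} → ℂ`. -/
def twistedKernel {n : ℕ} (f : (Fin (2*n) → ℝ) → ℂ) :
    (Fin (2*n) → ℝ) → (Fin (2*n) → ℝ) → ℂ :=
  fun ξ η => f (η - ξ) * Complex.exp (Complex.I * ((ξ ⬝ᵥ (sympJ n).mulVec η : ℝ) : ℂ))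

/-!
Put `H = M + i(J - AᵀJA)` and `d(ξ) = exp(-½ ξᵀMξ)`. Expanding the quadratic form of the symmetric
`M` at `η - ξ` and moving `A` across `J` gives
`K_g(ξ, η) = d(ξ) · K_f(Aξ, Aη) · exp(ξᵀHη) · d(η)`.
The Gram matrix `(ξ_jᵀ H ξ_k)` is positive semidefinite because `H` is, hence so is its entrywise
exponential (a limit of nonnegative combinations of Hadamard powers, by the Schur product theorem).
One more Schur product with the matrix of `K_f` at the points `Aξ_j`, followed by a congruence with
the real diagonal matrix `diag(d(ξ_j))`, gives the positive semidefinite matrix of `K_g`.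
-/

namespace Matrix

variable {ι κ R : Type*} [Fintype ι] [Fintype κ]

section CommRing

variable [CommRing R]

theorem IsSymm.dotProduct_mulVec_comm {M : Matrix ι ι R} (hM : M.IsSymm) (x y : ι → R) :
    y ⬝ᵥ M *ᵥ x = x ⬝ᵥ M *ᵥ y := by
  rw [dotProduct_mulVec, ← mulVec_transpose, hM.eq, dotProduct_comm]

theorem mulVec_dotProduct_mulVec_mulVec (A P : Matrix ι ι R) (x y : ι → R) :
    A *ᵥ x ⬝ᵥ P *ᵥ (A *ᵥ y) = x ⬝ᵥ (Aᵀ * P * A) *ᵥ y := by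
  rw [← mulVec_mulVec, ← mulVec_mulVec, dotProduct_mulVec x, vecMul_transpose]

theorem PosSemidef.posSemidef_star_dotProduct_mulVec [PartialOrder R] [StarRing R]
    {H : Matrix κ κ R} (hH : H.PosSemidef) (v : ι → κ → R) :
    (of fun j k => star (v j) ⬝ᵥ H *ᵥ v k).PosSemidef := by
  convert hH.conjTranspose_mul_mul_same (of fun a k => v k a) using 1
  ext j k
  simp only [of_apply, mul_apply, conjTranspose_apply, dotProduct, mulVec, Finset.mul_sum,
    Finset.sum_mul, Pi.star_apply, mul_assoc]
  exact Finset.sum_comm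

end CommRing

theorem star_ofReal_dotProduct_add_I_smul_mulVec_ofReal (P B : Matrix ι ι ℝ) (x y : ι → ℝ) :
    star (fun i => (x i : ℂ)) ⬝ᵥ
        (P.map Complex.ofReal + Complex.I • B.map Complex.ofReal) *ᵥ (fun i => (y i : ℂ)) =
      (x ⬝ᵥ P *ᵥ y : ℝ) + Complex.I * (x ⬝ᵥ B *ᵥ y : ℝ) := by
  simp only [dotProduct, mulVec, Pi.star_apply, Complex.star_def, Complex.conj_ofReal, add_apply,
    smul_apply, map_apply, smul_eq_mul]
  push_cast
  simp only [Finset.mul_sum, ← Finset.sum_add_distrib]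
  exact Finset.sum_congr rfl fun i _ => Finset.sum_congr rfl fun j _ => by ring

theorem posSemidef_of_forall_dotProduct_mulVec_nonneg {A : Matrix ι ι ℂ}
    (hA : ∀ x, 0 ≤ star x ⬝ᵥ A *ᵥ x) : A.PosSemidef := by
  classical
  rw [← isPositive_toEuclideanLin_iff, LinearMap.isPositive_iff_complex]
  intro x
  set z := star (WithLp.ofLp x) ⬝ᵥ A *ᵥ WithLp.ofLp x
  have hz_real : z = z.re :=
    Complex.eq_re_of_ofReal_le (r := 0) (by rw [Complex.ofReal_zero]; exact hA _)
  have hinner : inner ℂ (A.toEuclideanLin x) x = z.re := by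
    rw [EuclideanSpace.inner_eq_star_dotProduct, dotProduct_star, dotProduct_comm]
    exact (congrArg star hz_real).trans (Complex.conj_ofReal _)
  simpa [hinner] using (Complex.nonneg_iff.mp (hA (WithLp.ofLp x))).1

theorem PosSemidef.map_pow {A : Matrix ι ι ℂ} (hA : A.PosSemidef) (k : ℕ) :
    (A.map (· ^ k)).PosSemidef := by
  induction k with
  | zero =>
    convert posSemidef_vecMulVec_self_star (fun _ : ι => (1 : ℂ)) using 1
    ext
    simp [vecMulVec]
  | succ k ih =>
    have hsucc : A.map (· ^ (k + 1)) = A.map (· ^ k) ⊙ A := by ext; simp [pow_succ]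
    rw [hsucc]
    exact ih.hadamard hA

open Nat in
theorem PosSemidef.map_exp {A : Matrix ι ι ℂ} (hA : A.PosSemidef) :
    (A.map Complex.exp).PosSemidef := by
  have hsum : HasSum (fun k : ℕ => (k !⁻¹ : ℝ) • A.map (· ^ k)) (A.map Complex.exp) := by
    refine Pi.hasSum.mpr fun i => Pi.hasSum.mpr fun j => ?_
    simpa [Complex.exp_eq_exp_ℂ] using NormedSpace.exp_series_hasSum_exp' (𝕂 := ℝ) (A i j)
  refine posSemidef_iff_dotProduct_mulVec.mpr
    ⟨hA.isHermitian.map _ Complex.exp_conj, fun x => ?_⟩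
  have hpartial (N : ℕ) :
      0 ≤ star x ⬝ᵥ (∑ k ∈ Finset.range N, (k !⁻¹ : ℝ) • A.map (· ^ k)) *ᵥ x :=
    (posSemidef_sum _ fun k _ => (hA.map_pow k).smul (by positivity)).dotProduct_mulVec_nonneg x
  have hcont : Continuous fun B : Matrix ι ι ℂ => star x ⬝ᵥ B *ᵥ x := by fun_prop
  exact ge_of_tendsto' ((hcont.tendsto _).comp hsum.tendsto_sum_nat) hpartial

end Matrix

theorem posDefKernel_iff {d : ℕ} {K : (Fin d → ℝ) → (Fin d → ℝ) → ℂ} :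
    PosDefKernel K ↔
      ∀ (m : ℕ) (ξ : Fin m → Fin d → ℝ), (of fun j k => K (ξ j) (ξ k)).PosSemidef := by
  have hsum (m : ℕ) (ξ : Fin m → Fin d → ℝ) (c : Fin m → ℂ) :
      ∑ j, ∑ k, (starRingEnd ℂ) (c j) * c k * K (ξ j) (ξ k) =
        star c ⬝ᵥ (of fun j k => K (ξ j) (ξ k)) *ᵥ c := by
    simp only [dotProduct, mulVec, of_apply, Finset.mul_sum, Pi.star_apply, Complex.star_def]
    exact Finset.sum_congr rfl fun j _ => Finset.sum_congr rfl fun k _ => by ring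
  exact ⟨fun hK m ξ => posSemidef_of_forall_dotProduct_mulVec_nonneg fun c => hsum m ξ c ▸ hK m ξ c,
    fun hK m ξ c => hsum m ξ c ▸ (hK m ξ).dotProduct_mulVec_nonneg c⟩

theorem twistedKernel_gaussian_mul_comp {n : ℕ} (A M : Matrix (Fin (2*n)) (Fin (2*n)) ℝ)
    (hM : Mᵀ = M) (f : (Fin (2*n) → ℝ) → ℂ) (x y : Fin (2*n) → ℝ) :
    twistedKernel (fun ξ =>
        Complex.exp (-(1/2 : ℂ) * ((ξ ⬝ᵥ M.mulVec ξ : ℝ) : ℂ)) * f (A.mulVec ξ)) x y =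
      Real.exp (-(1/2) * (x ⬝ᵥ M *ᵥ x)) *
        (twistedKernel f (A *ᵥ x) (A *ᵥ y) *
          Complex.exp ((x ⬝ᵥ M *ᵥ y : ℝ) +
            Complex.I * (x ⬝ᵥ (sympJ n - Aᵀ * sympJ n * A) *ᵥ y : ℝ))) *
        Real.exp (-(1/2) * (y ⬝ᵥ M *ᵥ y)) := by
  have hquad : (y - x) ⬝ᵥ M *ᵥ (y - x) =
      x ⬝ᵥ M *ᵥ x + y ⬝ᵥ M *ᵥ y - 2 * (x ⬝ᵥ M *ᵥ y) := by
    rw [mulVec_sub, dotProduct_sub, sub_dotProduct, sub_dotProduct,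
      IsSymm.dotProduct_mulVec_comm hM x y]
    ring
  simp only [twistedKernel, ← mulVec_sub, hquad, sub_mulVec, dotProduct_sub,
    mulVec_dotProduct_mulVec_mulVec, Complex.ofReal_exp]
  push_cast
  simp only [mul_add, mul_sub, Complex.exp_add, Complex.exp_sub]
  field_simp
  rw [Complex.exp_neg]
  field_simp

theorem twistedTransform_preserves_twistedKernel_general (n : ℕ)
    (A M : Matrix (Fin (2*n)) (Fin (2*n)) ℝ)
    (hMsymm : Mᵀ = M)
    (hMA : (M.map Complex.ofReal +
      Complex.I • ((sympJ n - Aᵀ * sympJ n * A).map Complex.ofReal)).PosSemidef)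
    (f : (Fin (2*n) → ℝ) → ℂ)
    (hf : PosDefKernel (twistedKernel f)) :
    PosDefKernel (twistedKernel fun ξ =>
      Complex.exp (-(1/2 : ℂ) * ((ξ ⬝ᵥ M.mulVec ξ : ℝ) : ℂ)) * f (A.mulVec ξ)) := by
  rw [posDefKernel_iff] at hf ⊢
  intro m ξ
  have hExpGram := (hMA.posSemidef_star_dotProduct_mulVec fun j i => (ξ j i : ℂ)).map_exp
  have hF := hf m fun j => A *ᵥ ξ j
  refine (congrArg PosSemidef ?_).mpr ((hF.hadamard hExpGram).conjTranspose_mul_mul_same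
    (diagonal fun j => (Real.exp (-(1/2) * (ξ j ⬝ᵥ M *ᵥ ξ j)) : ℂ)))
  ext j k
  simp only [of_apply, twistedKernel_gaussian_mul_comp A M hMsymm, diagonal_conjTranspose,
    mul_diagonal, diagonal_mul, hadamard_apply, map_apply,
    star_ofReal_dotProduct_add_I_smul_mulVec_ofReal, Pi.star_apply, Complex.star_def,
    Complex.conj_ofReal]

/-- If `M` is real positive definite (in particular symmetric), the Hermitian matrix
`M + i(J - AᵀJA)` is positive semidefinite, and `f` has a positive definite twisted
kernel, then `g(ξ) = exp(-(1/2) ξᵀMξ) · f(Aξ)` also has a positive definite twisted kernel. -/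
theorem twistedTransform_preserves_twistedKernel (n : ℕ) (hn : 1 ≤ n)
    (A M : Matrix (Fin (2*n)) (Fin (2*n)) ℝ)
    (hMsymm : Mᵀ = M) (hM : M.PosDef)
    (hMA : (M.map Complex.ofReal +
      Complex.I • ((sympJ n - Aᵀ * sympJ n * A).map Complex.ofReal)).PosSemidef)
    (f : (Fin (2*n) → ℝ) → ℂ)
    (hf : PosDefKernel (twistedKernel f)) :
    PosDefKernel (twistedKernel fun ξ =>
      Complex.exp (-(1/2 : ℂ) * ((ξ ⬝ᵥ M.mulVec ξ : ℝ) : ℂ)) * f (A.mulVec ξ)) :=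
  twistedTransform_preserves_twistedKernel_general n A M hMsymm hMA f hf
end
end

section
/- Let n ≥ 1, let J be the standard 2n×2n symplectic matrix, and let M_1, M_2, A_1, A_2 be real 2n×2n matrices with M_1, M_2 symmetric. If the complex Hermitian matrices M_1 + i·(J − A_1ᵀJA_1) and M_2 + i·(J − A_2ᵀJA_2) are both positive semidefinite, then the complex Hermitian matrix (M_2 + A_2ᵀM_1A_2) + i·(J − (A_1A_2)ᵀJ(A_1A_2)) is positive semidefinite. -/
noncomputable section
open Matrix
open scoped ComplexOrder

/-- If `M₁ + i(J - A₁ᵀJA₁)` and `M₂ + i(J - A₂ᵀJA₂)` are positive semidefinite,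
then so is `(M₂ + A₂ᵀM₁A₂) + i(J - (A₁A₂)ᵀJ(A₁A₂))`. -/
theorem composed_matrix_condition (n : ℕ) (hn : 1 ≤ n)
    (M₁ M₂ A₁ A₂ : Matrix (Fin (2*n)) (Fin (2*n)) ℝ)
    (hM₁ : M₁ᵀ = M₁) (hM₂ : M₂ᵀ = M₂)
    (h₁ : (M₁.map Complex.ofReal +
      Complex.I • ((sympJ n - A₁ᵀ * sympJ n * A₁).map Complex.ofReal)).PosSemidef)
    (h₂ : (M₂.map Complex.ofReal +
      Complex.I • ((sympJ n - A₂ᵀ * sympJ n * A₂).map Complex.ofReal)).PosSemidef) :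
    ((M₂ + A₂ᵀ * M₁ * A₂).map Complex.ofReal +
      Complex.I • ((sympJ n - (A₁ * A₂)ᵀ * sympJ n * (A₁ * A₂)).map
        Complex.ofReal)).PosSemidef := by
  set C := A₂.map Complex.ofReal with hC
  have hct : Cᴴ = A₂ᵀ.map Complex.ofReal := by
    ext i j; simp [hC, conjTranspose_apply]
  have key := (h₁.conjTranspose_mul_mul_same C).add h₂
  have hmul : ∀ (A B : Matrix (Fin (2*n)) (Fin (2*n)) ℝ),
      (A * B).map Complex.ofReal = A.map Complex.ofReal * B.map Complex.ofReal :=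
    fun A B => Matrix.map_mul (f := Complex.ofRealHom)
  have hadd : ∀ (A B : Matrix (Fin (2*n)) (Fin (2*n)) ℝ),
      (A + B).map Complex.ofReal = A.map Complex.ofReal + B.map Complex.ofReal :=
    fun A B => Matrix.map_add _ (by simp) A B
  have hsub : ∀ (A B : Matrix (Fin (2*n)) (Fin (2*n)) ℝ),
      (A - B).map Complex.ofReal = A.map Complex.ofReal - B.map Complex.ofReal :=
    fun A B => Matrix.map_sub _ (by simp) A B
  convert key using 1
  rw [hct]
  simp only [hC, hadd, hsub, hmul, transpose_mul]
  simp only [mul_add, add_mul, mul_sub, sub_mul, smul_sub, smul_add,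
    mul_smul_comm, smul_mul_assoc, mul_assoc]
  abel
end
end

section
/- Let A : [0,∞) → M_d(ℝ) be a continuous family of real d×d matrices satisfying A_0 = I and A_s·A_t = A_{s+t} for all s, t ≥ 0. Then there exists a real d×d matrix B such that A_t = exp(t·B) for all t ≥ 0, where exp denotes the matrix exponential. -/
/-!
Since `exp` is a local diffeomorphism at `0`, there is `r > 0` such that `exp` is injective on
`ball 0 r` and every element near `1` has a logarithm in `ball 0 (r/2)`. By continuity, `A t` has
such a logarithm `y t` for `t ∈ [0, ε]`; injectivity turns `A (ε/2^(n+1))^2 = A (ε/2^n)` into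
`y (ε/2^n) = 2 • y (ε/2^(n+1))`, so `A t = exp (t • B)` with `B = ε⁻¹ • y ε` at every `ε/2^n`,
hence at every `k ε/2^n`. These points are dense in `[0, ∞)`, and both sides are continuous there.
-/

open Filter Metric Set NormedSpace
open scoped Topology

theorem Ici_subset_closure_natCast_mul_div_two_pow {ε : ℝ} (hε : 0 < ε) :
    Ici 0 ⊆ closure (range fun p : ℕ × ℕ => p.1 * (ε / 2 ^ p.2)) := by
  intro t (ht : 0 ≤ t)
  have hscale : Tendsto (fun n : ℕ => 2 ^ n / ε) atTop atTop :=
    (tendsto_pow_atTop_atTop_of_one_lt one_lt_two).atTop_div_const hε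
  refine mem_closure_of_tendsto ((tendsto_nat_floor_mul_div_atTop ht).comp hscale) ?_
  refine Eventually.of_forall fun n => ⟨(⌊t * (2 ^ n / ε)⌋₊, n), ?_⟩
  simp only [Function.comp_apply]
  rw [div_div_eq_mul_div, mul_div_assoc]

structure IsOneParamSemigroup {M : Type*} [Monoid M] (A : ℝ → M) : Prop where
  map_zero : A 0 = 1
  map_add : ∀ s t : ℝ, 0 ≤ s → 0 ≤ t → A (s + t) = A s * A t

namespace IsOneParamSemigroup

variable {M : Type*} [Monoid M] {A : ℝ → M}

theorem map_natCast_mul (hA : IsOneParamSemigroup A) (k : ℕ) {s : ℝ} (hs : 0 ≤ s) :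
    A (k * s) = A s ^ k := by
  induction k with
  | zero => simp [hA.map_zero]
  | succ k ih =>
    rw [Nat.cast_succ, add_one_mul, hA.map_add _ _ (by positivity) hs, ih, pow_succ]

theorem eqOn_of_eq_div_two_pow [TopologicalSpace M] [T2Space M] {E : ℝ → M}
    (hA : IsOneParamSemigroup A) (hE : IsOneParamSemigroup E)
    (hAc : ContinuousOn A (Ici 0)) (hEc : ContinuousOn E (Ici 0)) {ε : ℝ} (hε : 0 < ε)
    (h : ∀ n : ℕ, A (ε / 2 ^ n) = E (ε / 2 ^ n)) : EqOn A E (Ici 0) := by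
  refine EqOn.of_subset_closure ?_ hAc hEc ?_ (Ici_subset_closure_natCast_mul_div_two_pow hε)
  · rintro _ ⟨⟨k, n⟩, rfl⟩
    have hn : 0 ≤ ε / 2 ^ n := by positivity
    rw [hA.map_natCast_mul k hn, hE.map_natCast_mul k hn, h n]
  · rintro _ ⟨⟨k, n⟩, rfl⟩
    exact mem_Ici.mpr (by positivity)

end IsOneParamSemigroup

section BanachAlgebra

variable {𝔸 : Type*} [NormedRing 𝔸] [NormedAlgebra ℝ 𝔸] [CompleteSpace 𝔸]

-- Mathlib's `exp` API is stated for normed `ℚ`-algebras.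
noncomputable local instance : NormedAlgebra ℚ 𝔸 := NormedAlgebra.restrictScalars ℚ ℝ 𝔸

theorem isOneParamSemigroup_exp_smul (B : 𝔸) : IsOneParamSemigroup fun t : ℝ => exp (t • B) :=
  ⟨by simp, fun s t _ _ => by
    rw [add_smul, exp_add_of_commute ((Commute.refl B).smul_left s |>.smul_right t)]⟩

theorem continuous_exp_smul (B : 𝔸) : Continuous fun t : ℝ => exp (t • B) :=
  exp_continuous.comp (continuous_id.smul continuous_const)

theorem exists_injOn_exp_ball_and_image_mem_nhds_one :
    ∃ r > 0, InjOn (exp : 𝔸 → 𝔸) (ball 0 r) ∧ exp '' ball (0 : 𝔸) (r / 2) ∈ 𝓝 1 := by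
  have hd : HasStrictFDerivAt (exp : 𝔸 → 𝔸) ((ContinuousLinearEquiv.refl ℝ 𝔸 : 𝔸 →L[ℝ] 𝔸)) 0 :=
    hasStrictFDerivAt_exp_zero
  obtain ⟨r, hr, hball⟩ := isOpen_iff.mp hd.toOpenPartialHomeomorph.open_source 0
    hd.mem_toOpenPartialHomeomorph_source
  refine ⟨r, hr, ?_, ?_⟩
  · rw [← hd.toOpenPartialHomeomorph_coe]
    exact hd.toOpenPartialHomeomorph.injOn.mono hball
  · rw [← exp_zero, ← hd.map_nhds_eq_of_equiv]
    exact image_mem_map (ball_mem_nhds 0 (half_pos hr))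

theorem eq_two_smul_of_exp_eq_sq {r : ℝ} (hinj : InjOn (exp : 𝔸 → 𝔸) (ball 0 r)) {x y : 𝔸}
    (hx : x ∈ ball 0 (r / 2)) (hy : y ∈ ball 0 (r / 2)) (h : exp y = exp x ^ 2) :
    y = (2 : ℝ) • x := by
  rw [mem_ball_zero_iff] at hx hy
  refine hinj (mem_ball_zero_iff.mpr (by linarith [norm_nonneg y])) (mem_ball_zero_iff.mpr ?_) ?_
  · rw [norm_smul, Real.norm_ofNat]; linarith [norm_nonneg x]
  · rw [h, ofNat_smul_eq_nsmul, NormedSpace.exp_nsmul]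

theorem IsOneParamSemigroup.exists_eq_exp_div_two_pow {A : ℝ → 𝔸} (hA : IsOneParamSemigroup A)
    (hc : ContinuousWithinAt A (Ici 0) 0) :
    ∃ ε > 0, ∃ B : 𝔸, ∀ n : ℕ, A (ε / 2 ^ n) = exp ((ε / 2 ^ n) • B) := by
  obtain ⟨r, -, hinj, hU⟩ := exists_injOn_exp_ball_and_image_mem_nhds_one (𝔸 := 𝔸)
  obtain ⟨ε, hε, hIcc⟩ := mem_nhdsGE_iff_exists_Icc_subset.mp (hc (hA.map_zero ▸ hU))
  have hmem : ∀ n : ℕ, ε / 2 ^ n ∈ Icc 0 ε := fun n =>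
    ⟨by positivity, div_le_self hε.le (one_le_pow₀ one_le_two)⟩
  choose y hy hexp using fun n => hIcc (hmem n)
  have hhalf : ∀ n, y n = (2 : ℝ) • y (n + 1) := fun n => by
    refine eq_two_smul_of_exp_eq_sq hinj (hy (n + 1)) (hy n) ?_
    rw [hexp, hexp, sq, ← hA.map_add _ _ (hmem _).1 (hmem _).1, pow_succ]
    congr 1
    ring
  have hy0 : ∀ n, y 0 = (2 ^ n : ℝ) • y n := fun n => by
    induction n with
    | zero => simp
    | succ n ih => rw [ih, hhalf n, smul_smul, pow_succ]
  refine ⟨ε, hε, ε⁻¹ • y 0, fun n => ?_⟩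
  rw [← hexp n, hy0 n, smul_smul, smul_smul]
  field_simp
  rw [one_smul]

theorem IsOneParamSemigroup.exists_eq_exp_smul {A : ℝ → 𝔸} (hA : IsOneParamSemigroup A)
    (hc : ContinuousOn A (Ici 0)) : ∃ B : 𝔸, ∀ t : ℝ, 0 ≤ t → A t = exp (t • B) := by
  obtain ⟨ε, hε, B, hB⟩ := hA.exists_eq_exp_div_two_pow (hc 0 self_mem_Ici)
  exact ⟨B, fun t ht => hA.eqOn_of_eq_div_two_pow (isOneParamSemigroup_exp_smul B) hc
    (continuous_exp_smul B).continuousOn hε hB ht⟩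

end BanachAlgebra

/-- A continuous one-parameter multiplicative family of real matrices on `[0,∞)`
with `A 0 = 1` is of the form `A t = exp (t • B)` for some fixed matrix `B`. -/
theorem matrix_semigroup_exp (d : ℕ) (A : ℝ → Matrix (Fin d) (Fin d) ℝ)
    (hcont : ContinuousOn A (Set.Ici 0))
    (h0 : A 0 = 1)
    (hmul : ∀ s t : ℝ, 0 ≤ s → 0 ≤ t → A s * A t = A (s + t)) :
    ∃ B : Matrix (Fin d) (Fin d) ℝ, ∀ t : ℝ, 0 ≤ t → A t = NormedSpace.exp (t • B) := by
  let := Matrix.linftyOpNormedRing (n := Fin d) (α := ℝ)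
  let := Matrix.linftyOpNormedAlgebra (n := Fin d) (R := ℝ) (α := ℝ)
  exact IsOneParamSemigroup.exists_eq_exp_smul ⟨h0, fun s t hs ht => (hmul s t hs ht).symm⟩ hcont
end

section
/- Let A be a real d×d matrix and let M : [0,∞) → M_d(ℝ) be differentiable in t with M_0 = 0 and M_{t+s} = M_t + (exp(tA))ᵀ · M_s · exp(tA) for all s, t ≥ 0. Set N = (dM/dt)(0). Then for every t ≥ 0, M_t = ∫_0^t (exp(τA))ᵀ · N · exp(τA) dτ. -/
noncomputable section
open Matrix
open scoped ComplexOrder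

/-!
Differentiating the cocycle identity `M (t + s) = M t + E(t)ᵀ M(s) E(t)` in `s` at `s = 0⁺`
shows that `M` has right derivative `E(t)ᵀ N E(t)` at every `t ≥ 0`, where `E(t) = exp(tA)`.
This derivative is continuous and `M 0 = 0`, so the fundamental theorem of calculus for right
derivatives gives the integral formula.
-/

/-- `Mmat d A N t = ∫_0^t (exp(τA))ᵀ · N · exp(τA) dτ` (entrywise integral). -/
def Mmat (d : ℕ) (A N : Matrix (Fin d) (Fin d) ℝ) (t : ℝ) : Matrix (Fin d) (Fin d) ℝ :=
  Matrix.of fun i j =>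
    ∫ τ in (0:ℝ)..t, ((NormedSpace.exp (τ • A))ᵀ * N * NormedSpace.exp (τ • A)) i j

theorem Matrix.continuous_exp_smul {n : Type*} [Fintype n] [DecidableEq n]
    (A : Matrix n n ℝ) : Continuous fun τ : ℝ => NormedSpace.exp (τ • A) := by
  let _ := Matrix.linftyOpNormedRing (n := n) (α := ℝ)
  let _ := Matrix.linftyOpNormedAlgebra (R := ℝ) (n := n) (α := ℝ)
  exact continuous_iff_continuousAt.2 fun τ => (hasDerivAt_exp_smul_const A τ).continuousAt

attribute [local instance] Matrix.normedAddCommGroup Matrix.normedSpace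

open Set

theorem hasDerivWithinAt_Ici_of_cocycle {E : Type*} [NormedAddCommGroup E] [NormedSpace ℝ E]
    {M : ℝ → E} {N : E} {t : ℝ} (L : E →L[ℝ] E) (hM : HasDerivWithinAt M N (Ici 0) 0)
    (hadd : ∀ s, 0 ≤ s → M (t + s) = M t + L (M s)) :
    HasDerivWithinAt M (L N) (Ici t) t := by
  have hshift : HasDerivWithinAt (fun τ => τ - t) 1 (Ici t) t :=
    (hasDerivWithinAt_id t _).sub_const t
  have := ((L.hasFDerivAt.comp_hasDerivWithinAt 0 hM).const_add (M t)).scomp_of_eq t hshift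
    (fun τ (hτ : t ≤ τ) => sub_nonneg.2 hτ) (sub_self t).symm
  rw [one_smul] at this
  refine this.congr_of_mem (fun τ hτ => ?_) self_mem_Ici
  simpa using hadd (τ - t) (sub_nonneg.2 hτ)

def Matrix.congruenceCLM {𝕜 n : Type*} [NontriviallyNormedField 𝕜] [CompleteSpace 𝕜]
    [Fintype n] (P : Matrix n n 𝕜) :
    Matrix n n 𝕜 →L[𝕜] Matrix n n 𝕜 :=
  (LinearMap.mulRight 𝕜 P ∘ₗ LinearMap.mulLeft 𝕜 Pᵀ).toContinuousLinearMap

@[simp]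
theorem Matrix.congruenceCLM_apply {𝕜 n : Type*} [NontriviallyNormedField 𝕜] [CompleteSpace 𝕜]
    [Fintype n] (P X : Matrix n n 𝕜) : congruenceCLM P X = Pᵀ * X * P :=
  rfl

/-- If `M : [0,∞) → M_d(ℝ)` is differentiable with `M 0 = 0` and satisfies the
cocycle identity `M (t+s) = M t + (exp(tA))ᵀ · M s · exp(tA)`, then with
`N = (dM/dt)(0)` we have `M t = ∫_0^t (exp(τA))ᵀ · N · exp(τA) dτ`. -/
theorem cocycle_matrix_integral (d : ℕ) (A : Matrix (Fin d) (Fin d) ℝ)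
    (M : ℝ → Matrix (Fin d) (Fin d) ℝ)
    (hdiff : ∀ t ∈ Set.Ici (0:ℝ), DifferentiableWithinAt ℝ M (Set.Ici 0) t)
    (h0 : M 0 = 0)
    (hadd : ∀ s t : ℝ, 0 ≤ s → 0 ≤ t →
      M (t + s) = M t + (NormedSpace.exp (t • A))ᵀ * M s * NormedSpace.exp (t • A))
    (N : Matrix (Fin d) (Fin d) ℝ) (hN : N = derivWithin M (Set.Ici 0) 0) :
    ∀ t : ℝ, 0 ≤ t → M t = Mmat d A N t := by
  set E : ℝ → Matrix (Fin d) (Fin d) ℝ := fun τ => NormedSpace.exp (τ • A)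
  have hN0 : HasDerivWithinAt M N (Ici 0) 0 := hN ▸ (hdiff 0 self_mem_Ici).hasDerivWithinAt
  have hderiv (τ : ℝ) (hτ : 0 ≤ τ) : HasDerivWithinAt M ((E τ)ᵀ * N * E τ) (Ici τ) τ :=
    congruenceCLM_apply (E τ) N ▸
      hasDerivWithinAt_Ici_of_cocycle _ hN0 fun s hs => hadd s τ hs hτ
  intro t ht
  have hcont : ContinuousOn M (Icc 0 t) := fun τ hτ =>
    (hdiff τ hτ.1).continuousWithinAt.mono Icc_subset_Ici_self
  have hexp := A.continuous_exp_smul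
  ext i j
  let entry := (entryLinearMap ℝ ℝ i j).toContinuousLinearMap
  have hftc := intervalIntegral.integral_eq_sub_of_hasDeriv_right_of_le ht
    (entry.continuous.comp_continuousOn hcont)
    (fun τ hτ => entry.hasFDerivAt.comp_hasDerivWithinAt τ
      ((hderiv τ hτ.1.le).mono Ioi_subset_Ici_self))
    (Continuous.intervalIntegrable (by fun_prop) 0 t)
  rw [Function.comp_apply, Function.comp_apply, h0, map_zero, sub_zero] at hftc
  exact hftc.symm
end
end

section
/- Let n ≥ 1, let J be the standard 2n×2n symplectic matrix, let A be a real 2n×2n matrix, let N be a real symmetric 2n×2n matrix, and define M_t = ∫_0^t (exp(τA))ᵀ · N · exp(τA) dτ for t ≥ 0. If the complex Hermitian matrix M_t + i·(J − (exp(tA))ᵀ J exp(tA)) is positive semidefinite for every t > 0, then the complex Hermitian matrix N + i·(AᵀJ + JA) is positive semidefinite. -/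
noncomputable section
open Matrix
open scoped ComplexOrder

/-!
Write `F t = M_t + i(J - (exp(tA))ᵀ J exp(tA))`. Then `F 0 = 0` and `F` is differentiable with
`F'(0) = N - i(AᵀJ + JA)`, so `F'(0)` is the limit of the positive semidefinite matrices
`t⁻¹ F t` as `t → 0⁺` and is positive semidefinite, the cone being closed. The matrix in the
conclusion is the entrywise conjugate of `F'(0)`, i.e. its transpose, hence positive
semidefinite as well.
-/

open Filter Topology Set NormedSpace

attribute [local instance] Matrix.linftyOpNormedAddCommGroup Matrix.linftyOpNormedRing
  Matrix.linftyOpNormedAlgebra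

namespace Matrix

variable {𝕜 n : Type*} [RCLike 𝕜]

theorem PosSemidef.map_star {A : Matrix n n 𝕜} (hA : A.PosSemidef) :
    (A.map star).PosSemidef := by
  have : A.map star = Aᵀ := by
    conv_rhs => rw [← hA.isHermitian.eq]
    rw [Matrix.conjTranspose, transpose_map, transpose_transpose]
  exact this ▸ hA.transpose

variable [Fintype n]

theorem isClosed_setOf_posSemidef : IsClosed {A : Matrix n n 𝕜 | A.PosSemidef} := by
  simp only [posSemidef_iff_dotProduct_mulVec, ofPred_and, ofPred_forall]
  refine .inter (isClosed_eq continuous_id.matrix_conjTranspose continuous_id) <|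
    isClosed_iInter fun x => isClosed_le continuous_const ?_
  exact continuous_const.dotProduct (continuous_id.matrix_mulVec continuous_const)

theorem posSemidef_of_hasDerivAt_apply {F : ℝ → Matrix n n 𝕜} {F' : Matrix n n 𝕜}
    (hF₀ : F 0 = 0) (hF : ∀ i j, HasDerivAt (fun t => F t i j) (F' i j) 0)
    (hpos : ∀ t, 0 < t → (F t).PosSemidef) : F'.PosSemidef := by
  have hslope : Tendsto (fun t : ℝ => t⁻¹ • F t) (𝓝[>] 0) (𝓝 F') := by
    refine tendsto_pi_nhds.2 fun i => tendsto_pi_nhds.2 fun j => ?_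
    refine ((hasDerivAt_iff_tendsto_slope.1 (hF i j)).mono_left (nhdsGT_le_nhdsNE 0)).congr
      fun t => ?_
    simp [slope_def_module, hF₀]
  refine isClosed_setOf_posSemidef.mem_of_tendsto hslope ?_
  filter_upwards [self_mem_nhdsWithin] with t (ht : 0 < t)
  exact (hpos t ht).smul (inv_nonneg.2 ht.le)

end Matrix

theorem HasDerivAt.map_ofReal_add_I_smul_apply {m : Type*} {P Q : ℝ → Matrix m m ℝ}
    {p q t : ℝ} {i j : m} (hP : HasDerivAt (fun s => P s i j) p t)
    (hQ : HasDerivAt (fun s => Q s i j) q t) :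
    HasDerivAt (fun s => ((P s).map Complex.ofReal + Complex.I • (Q s).map Complex.ofReal) i j)
      (p + Complex.I * q) t := by
  simp only [Matrix.add_apply, Matrix.smul_apply, map_apply, smul_eq_mul]
  exact hP.ofReal_comp.fun_add (hQ.ofReal_comp.const_mul Complex.I)

variable {m : Type*} [Fintype m] [DecidableEq m]

theorem HasDerivAt.matrix_apply {F : ℝ → Matrix m m ℝ} {F' : Matrix m m ℝ} {t : ℝ}
    (hF : HasDerivAt F F' t) (i j : m) : HasDerivAt (fun s => F s i j) (F' i j) t :=
  (entryLinearMap ℝ ℝ i j).toContinuousLinearMap.hasFDerivAt.comp_hasDerivAt t hF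

theorem hasDerivAt_transpose_exp_mul_mul_exp (A J : Matrix m m ℝ) (t : ℝ) :
    HasDerivAt (fun s : ℝ => (exp (s • A))ᵀ * J * exp (s • A))
      ((exp (t • A))ᵀ * (Aᵀ * J + J * A) * exp (t • A)) t := by
  have hT : ∀ s : ℝ, (exp (s • A))ᵀ = exp (s • Aᵀ) := fun s => by
    rw [← exp_transpose, transpose_smul]
  simp only [hT]
  refine (((hasDerivAt_exp_smul_const Aᵀ t).mul_const J).mul
    (hasDerivAt_exp_smul_const' A t)).congr_deriv ?_
  noncomm_ring

theorem continuous_transpose_exp_mul_mul_exp (A N : Matrix m m ℝ) :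
    Continuous fun τ : ℝ => (exp (τ • A))ᵀ * N * exp (τ • A) := by
  have hE : Continuous fun τ : ℝ => exp (τ • A) := exp_continuous.comp (by fun_prop)
  exact (hE.matrix_transpose.mul continuous_const).mul hE

theorem hasDerivAt_Mmat_apply {d : ℕ} (A N : Matrix (Fin d) (Fin d) ℝ) (t : ℝ) (i j : Fin d) :
    HasDerivAt (fun s => Mmat d A N s i j) (((exp (t • A))ᵀ * N * exp (t • A)) i j) t :=
  ((continuous_apply_apply i j).comp (continuous_transpose_exp_mul_mul_exp A N)
    |>.integral_hasStrictDerivAt 0 t).hasDerivAt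

theorem infinitesimal_condition_general (n : ℕ)
    (A N : Matrix (Fin (2*n)) (Fin (2*n)) ℝ)
    (h : ∀ t : ℝ, 0 < t →
      ((Mmat (2*n) A N t).map Complex.ofReal +
        Complex.I • ((sympJ n -
          (NormedSpace.exp (t • A))ᵀ * sympJ n * NormedSpace.exp (t • A)).map
            Complex.ofReal)).PosSemidef) :
    (N.map Complex.ofReal +
      Complex.I • ((Aᵀ * sympJ n + sympJ n * A).map Complex.ofReal)).PosSemidef := by
  set J := sympJ n
  set F : ℝ → Matrix (Fin (2*n)) (Fin (2*n)) ℂ := fun t =>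
    (Mmat (2*n) A N t).map Complex.ofReal +
      Complex.I • ((J - (exp (t • A))ᵀ * J * exp (t • A)).map Complex.ofReal)
  set F' := N.map Complex.ofReal + Complex.I • (-(Aᵀ * J + J * A)).map Complex.ofReal
  have hF₀ : F 0 = 0 := by ext; simp [F, Mmat]
  have hF' : ∀ i j, HasDerivAt (fun t => F t i j) (F' i j) 0 := fun i j => by
    have hM := hasDerivAt_Mmat_apply A N 0 i j
    have hQ := ((hasDerivAt_transpose_exp_mul_mul_exp A J 0).const_sub J).matrix_apply i j
    simp only [zero_smul, exp_zero, transpose_one, one_mul, mul_one] at hM hQ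
    simpa [F, F'] using hM.map_ofReal_add_I_smul_apply hQ
  have hconj : F'.map star =
      N.map Complex.ofReal + Complex.I • (Aᵀ * J + J * A).map Complex.ofReal := by
    ext i j
    simp only [F', map_apply, Matrix.add_apply, Matrix.neg_apply, Matrix.smul_apply, smul_eq_mul,
      RCLike.star_def, map_add, map_mul, Complex.conj_ofReal, Complex.conj_I]
    push_cast
    ring
  exact hconj ▸ (posSemidef_of_hasDerivAt_apply hF₀ hF' h).map_star

/-- If `M_t + i(J - (exp(tA))ᵀ J exp(tA))` is positive semidefinite for all `t > 0`,
where `M_t = ∫_0^t (exp(τA))ᵀ N exp(τA) dτ`, then `N + i(AᵀJ + JA)` is positive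
semidefinite. -/
theorem infinitesimal_condition (n : ℕ) (hn : 1 ≤ n)
    (A N : Matrix (Fin (2*n)) (Fin (2*n)) ℝ) (hN : Nᵀ = N)
    (h : ∀ t : ℝ, 0 < t →
      ((Mmat (2*n) A N t).map Complex.ofReal +
        Complex.I • ((sympJ n -
          (NormedSpace.exp (t • A))ᵀ * sympJ n * NormedSpace.exp (t • A)).map
            Complex.ofReal)).PosSemidef) :
    (N.map Complex.ofReal +
      Complex.I • ((Aᵀ * sympJ n + sympJ n * A).map Complex.ofReal)).PosSemidef :=
  infinitesimal_condition_general n A N h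
end
end

section
/- Let A be a real d×d matrix and let ψ : [0,∞) × ℝ^d → ℂ be such that ψ_0(ξ) = 0 for all ξ, for each fixed ξ the map t ↦ ψ_t(ξ) is differentiable with continuous derivative, and ψ_{t+s}(ξ) = ψ_t(ξ) + ψ_s(exp(tA)·ξ) for all s, t ≥ 0 and all ξ ∈ ℝ^d. Define γ(ξ) = (d/dt)ψ_t(ξ)|_{t=0}. Then for every t ≥ 0 and every ξ ∈ ℝ^d, ψ_t(ξ) = ∫_0^t γ(exp(τA)·ξ) dτ. -/
/-!
Differentiating the cocycle identity `ψ_{t+s}(ξ) = ψ_t(ξ) + ψ_s(exp(tA)·ξ)` in `s` at `s = 0⁺`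
shows that `t ↦ ψ_t(ξ)` has right derivative `γ(exp(tA)·ξ)` at every `t ≥ 0`. This derivative is
continuous by assumption, so the fundamental theorem of calculus and `ψ_0 = 0` give the formula.
Nothing about the matrix exponential is used: the argument works for any family of maps
`φ t : X → X` in place of `ξ ↦ exp(tA)·ξ`.
-/

open Set

section Cocycle

variable {X E : Type*} [NormedAddCommGroup E] [NormedSpace ℝ E]

theorem hasDerivWithinAt_Ici_of_add_eq {f g : ℝ → E} {g' : E} {t : ℝ} (hg0 : g 0 = 0)
    (hg : HasDerivWithinAt g g' (Ici 0) 0) (hfg : ∀ s, 0 ≤ s → f (t + s) = f t + g s) :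
    HasDerivWithinAt f g' (Ici t) t := by
  have hshift : HasDerivWithinAt (fun s => f t + g (s - t)) g' (Ici t) t := by
    have hsub : MapsTo (fun s : ℝ => s - t) (Ici t) (Ici 0) := fun _ hs => sub_nonneg.2 (mem_Ici.1 hs)
    simpa using (hg.scomp_of_eq t ((hasDerivWithinAt_id t _).sub_const t) hsub
      (sub_self t).symm).const_add (f t)
  refine hshift.congr (fun s hs => ?_) (by simp [hg0])
  simpa using hfg (s - t) (sub_nonneg.2 hs)

variable {φ : ℝ → X → X} {ψ : ℝ → X → E}

theorem hasDerivWithinAt_Ici_of_cocycle_s11 (h0 : ∀ x, ψ 0 x = 0)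
    (hadd : ∀ s t : ℝ, 0 ≤ s → 0 ≤ t → ∀ x, ψ (t + s) x = ψ t x + ψ s (φ t x))
    {γ : X → E} (hγ : ∀ x, HasDerivWithinAt (ψ · x) (γ x) (Ici 0) 0) {t : ℝ} (ht : 0 ≤ t)
    (x : X) : HasDerivWithinAt (ψ · x) (γ (φ t x)) (Ici t) t :=
  hasDerivWithinAt_Ici_of_add_eq (h0 _) (hγ _) fun s hs => hadd s t hs ht x

theorem eq_integral_derivWithin_of_cocycle [CompleteSpace E] (h0 : ∀ x, ψ 0 x = 0)
    (hadd : ∀ s t : ℝ, 0 ≤ s → 0 ≤ t → ∀ x, ψ (t + s) x = ψ t x + ψ s (φ t x))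
    (hdiff : ∀ x, DifferentiableOn ℝ (ψ · x) (Ici 0))
    (hcont : ∀ x, ContinuousOn (derivWithin (ψ · x) (Ici 0)) (Ici 0)) {t : ℝ} (ht : 0 ≤ t)
    (x : X) : ψ t x = ∫ τ in (0 : ℝ)..t, derivWithin (ψ · (φ τ x)) (Ici 0) 0 := by
  have hright : ∀ τ, 0 ≤ τ →
      HasDerivWithinAt (ψ · x) (derivWithin (ψ · (φ τ x)) (Ici 0) 0) (Ici τ) τ :=
    fun τ hτ => hasDerivWithinAt_Ici_of_cocycle_s11 h0 hadd
      (fun y => (hdiff y 0 self_mem_Ici).hasDerivWithinAt) hτ x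
  have hderiv : EqOn (derivWithin (ψ · x) (Ici 0))
      (fun τ => derivWithin (ψ · (φ τ x)) (Ici 0) 0) (Ici 0) := fun τ hτ =>
    (derivWithin_subset (Ici_subset_Ici.2 hτ) (uniqueDiffWithinAt_Ici τ)
      (hdiff x τ hτ)).symm.trans ((hright τ hτ).derivWithin (uniqueDiffWithinAt_Ici τ))
  have hint : IntervalIntegrable (fun τ => derivWithin (ψ · (φ τ x)) (Ici 0) 0)
      MeasureTheory.volume 0 t :=
    (((hcont x).congr hderiv.symm).mono Icc_subset_Ici_self).intervalIntegrable_of_Icc ht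
  rw [intervalIntegral.integral_eq_sub_of_hasDeriv_right_of_le ht
    ((hdiff x).continuousOn.mono Icc_subset_Ici_self)
    (fun τ hτ => (hright τ hτ.1.le).mono Ioi_subset_Ici_self) hint, h0, sub_zero]

end Cocycle

/-- If `ψ_0 = 0`, each `t ↦ ψ_t(ξ)` is differentiable on `[0,∞)` with continuous
derivative, and `ψ_{t+s}(ξ) = ψ_t(ξ) + ψ_s(exp(tA)·ξ)`, then with
`γ(ξ) = (d/dt)ψ_t(ξ)|_{t=0}` we have `ψ_t(ξ) = ∫_0^t γ(exp(τA)·ξ) dτ`. -/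
theorem additive_cocycle_integral (d : ℕ) (A : Matrix (Fin d) (Fin d) ℝ)
    (ψ : ℝ → (Fin d → ℝ) → ℂ)
    (h0 : ∀ ξ, ψ 0 ξ = 0)
    (hdiff : ∀ ξ, ∀ t ∈ Set.Ici (0:ℝ),
      DifferentiableWithinAt ℝ (fun s => ψ s ξ) (Set.Ici 0) t)
    (hcont : ∀ ξ, ContinuousOn (derivWithin (fun s => ψ s ξ) (Set.Ici 0)) (Set.Ici 0))
    (hadd : ∀ s t : ℝ, 0 ≤ s → 0 ≤ t → ∀ ξ,
      ψ (t + s) ξ = ψ t ξ + ψ s ((NormedSpace.exp (t • A)).mulVec ξ))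
    (γ : (Fin d → ℝ) → ℂ)
    (hγ : ∀ ξ, γ ξ = derivWithin (fun s => ψ s ξ) (Set.Ici 0) 0) :
    ∀ t : ℝ, 0 ≤ t → ∀ ξ,
      ψ t ξ = ∫ τ in (0:ℝ)..t, γ ((NormedSpace.exp (τ • A)).mulVec ξ) := by
  intro t ht ξ
  simp only [hγ]
  exact eq_integral_derivWithin_of_cocycle h0 hadd hdiff hcont ht ξ
end

section
/- Let A be a real 2n×2n matrix, N a real 2n×2n matrix, and γ : ℝ^{2n} → ℂ continuous. Define M_t = ∫_0^t (exp(τA))ᵀ · N · exp(τA) dτ and φ_t(ξ) = exp(∫_0^t γ(exp(τA)·ξ) dτ), and for each t ≥ 0 define the transform T̃_t on functions f : ℝ^{2n} → ℂ by (T̃_t f)(ξ) = f(exp(tA)·ξ) · exp(−(1/2)·ξᵀM_tξ) · φ_t(ξ). Then T̃_0 is the identity and T̃_s(T̃_t f) = T̃_{s+t} f for all s, t ≥ 0 and all f : ℝ^{2n} → ℂ. -/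
noncomputable section
open Matrix
open scoped ComplexOrder

/-- `phiFun d A γ t ξ = exp(∫_0^t γ(exp(τA)·ξ) dτ)`. -/
def phiFun (d : ℕ) (A : Matrix (Fin d) (Fin d) ℝ) (γ : (Fin d → ℝ) → ℂ) (t : ℝ)
    (ξ : Fin d → ℝ) : ℂ :=
  Complex.exp (∫ τ in (0:ℝ)..t, γ ((NormedSpace.exp (τ • A)).mulVec ξ))
/-- The twisted convolution transform `T̃(φ,M,A)` acting on functions `f : ℝ^d → ℂ`:
`(T̃(φ,M,A) f)(ξ) = f(Aξ) · exp(-(1/2) ξᵀMξ) · φ(ξ)`. -/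
def twistedTransform {d : ℕ} (φ : (Fin d → ℝ) → ℂ) (M A : Matrix (Fin d) (Fin d) ℝ)
    (f : (Fin d → ℝ) → ℂ) : (Fin d → ℝ) → ℂ :=
  fun ξ => f (A.mulVec ξ) * Complex.exp (-(1/2 : ℂ) * ((ξ ⬝ᵥ M.mulVec ξ : ℝ) : ℂ)) * φ ξ


/-! The quadratic form `ξᵀ M_t ξ` and `log φ_t ξ` are both integrals `∫_0^t g (exp (τA) ξ) dτ` of a
continuous function along the linear flow, hence additive cocycles:
`c (s + t) ξ = c s ξ + c t (exp (sA) ξ)`. Together with `exp ((s + t)A) = exp (tA) exp (sA)`,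
this is exactly what makes the composite of two twisted transforms a twisted transform again. -/

open MeasureTheory NormedSpace

theorem intervalIntegral.integral_zero_add_eq_add_integral_comp_add_left
    {E : Type*} [NormedAddCommGroup E] [NormedSpace ℝ E]
    {F : ℝ → E} (hF : Continuous F) (s t : ℝ) :
    ∫ τ in (0:ℝ)..(s + t), F τ = (∫ τ in (0:ℝ)..s, F τ) + ∫ τ in (0:ℝ)..t, F (s + τ) := by
  rw [← integral_add_adjacent_intervals (hF.intervalIntegrable 0 s)
    (hF.intervalIntegrable s (s + t)), integral_comp_add_left F s, add_zero]

namespace Matrix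

variable {ι : Type*} [Fintype ι] [DecidableEq ι]

attribute [local instance] Matrix.linftyOpNormedRing Matrix.linftyOpNormedAlgebra in
theorem continuous_exp_smul_s14 (A : Matrix ι ι ℝ) : Continuous fun τ : ℝ => exp (τ • A) :=
  (differentiable_exp_smul_const ℝ A).continuous

theorem exp_add_smul (A : Matrix ι ι ℝ) (s t : ℝ) :
    exp ((s + t) • A) = exp (t • A) * exp (s • A) := by
  rw [add_comm, add_smul]
  exact exp_add_of_commute _ _ ((Commute.refl A).smul_left t |>.smul_right s)

theorem integral_exp_smul_mulVec_add {E : Type*} [NormedAddCommGroup E] [NormedSpace ℝ E]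
    (A : Matrix ι ι ℝ) {g : (ι → ℝ) → E} (hg : Continuous g) (s t : ℝ) (ξ : ι → ℝ) :
    ∫ τ in (0:ℝ)..(s + t), g (exp (τ • A) *ᵥ ξ) =
      (∫ τ in (0:ℝ)..s, g (exp (τ • A) *ᵥ ξ)) +
        ∫ τ in (0:ℝ)..t, g (exp (τ • A) *ᵥ (exp (s • A) *ᵥ ξ)) := by
  simpa only [Function.comp_def, exp_add_smul, ← mulVec_mulVec] using
    intervalIntegral.integral_zero_add_eq_add_integral_comp_add_left
      (hg.comp ((continuous_exp_smul_s14 A).matrix_mulVec continuous_const)) s t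

theorem dotProduct_of_intervalIntegral_mulVec {a b : ℝ} {F : ℝ → Matrix ι ι ℝ}
    (hF : ∀ i j, IntervalIntegrable (fun τ => F τ i j) volume a b) (v w : ι → ℝ) :
    v ⬝ᵥ of (fun i j => ∫ τ in a..b, F τ i j) *ᵥ w = ∫ τ in a..b, v ⬝ᵥ F τ *ᵥ w := by
  have hterm : ∀ i j, IntervalIntegrable (fun τ => v i * (w j * F τ i j)) volume a b :=
    fun i j => ((hF i j).const_mul _).const_mul _
  simp only [← toLinearMap₂'_apply', toLinearMap₂'_apply, smul_eq_mul, of_apply]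
  rw [intervalIntegral.integral_finsetSum fun i _ => by
    simpa only [Finset.sum_fn] using IntervalIntegrable.sum _ fun j _ => hterm i j]
  refine Finset.sum_congr rfl fun i _ => ?_
  simp only [intervalIntegral.integral_finsetSum fun j _ => hterm i j,
    intervalIntegral.integral_const_mul]

end Matrix

section

variable {d : ℕ}

theorem dotProduct_Mmat_mulVec (A N : Matrix (Fin d) (Fin d) ℝ) (t : ℝ) (ξ : Fin d → ℝ) :
    ξ ⬝ᵥ Mmat d A N t *ᵥ ξ =
      ∫ τ in (0:ℝ)..t, (exp (τ • A) *ᵥ ξ) ⬝ᵥ N *ᵥ (exp (τ • A) *ᵥ ξ) := by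
  have hE := continuous_exp_smul_s14 A
  rw [Mmat, dotProduct_of_intervalIntegral_mulVec fun i j =>
    ((hE.matrix_transpose.matrix_mul continuous_const).matrix_mul hE).matrix_elem i j
      |>.intervalIntegrable _ _]
  congr 1 with τ
  rw [← mulVec_mulVec, ← mulVec_mulVec, dotProduct_mulVec, vecMul_transpose]

theorem dotProduct_Mmat_mulVec_add (A N : Matrix (Fin d) (Fin d) ℝ) (s t : ℝ) (ξ : Fin d → ℝ) :
    ξ ⬝ᵥ Mmat d A N (s + t) *ᵥ ξ =
      ξ ⬝ᵥ Mmat d A N s *ᵥ ξ + (exp (s • A) *ᵥ ξ) ⬝ᵥ Mmat d A N t *ᵥ (exp (s • A) *ᵥ ξ) := by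
  simp only [dotProduct_Mmat_mulVec]
  exact integral_exp_smul_mulVec_add A (g := fun η => η ⬝ᵥ N *ᵥ η) (by fun_prop) s t ξ

theorem Mmat_zero (A N : Matrix (Fin d) (Fin d) ℝ) : Mmat d A N 0 = 0 := by
  ext i j
  simp [Mmat]

theorem phiFun_add (A : Matrix (Fin d) (Fin d) ℝ) {γ : (Fin d → ℝ) → ℂ} (hγ : Continuous γ)
    (s t : ℝ) (ξ : Fin d → ℝ) :
    phiFun d A γ (s + t) ξ = phiFun d A γ s ξ * phiFun d A γ t (exp (s • A) *ᵥ ξ) := by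
  rw [phiFun, phiFun, phiFun, ← Complex.exp_add, integral_exp_smul_mulVec_add A hγ]

theorem phiFun_zero (A : Matrix (Fin d) (Fin d) ℝ) (γ : (Fin d → ℝ) → ℂ) :
    phiFun d A γ 0 = 1 := by
  ext ξ
  simp [phiFun]

theorem twistedTransform_one_zero_one (f : (Fin d → ℝ) → ℂ) :
    twistedTransform 1 0 1 f = f := by
  ext ξ
  simp [twistedTransform]

theorem twistedTransform_twistedTransform {φ φ₁ φ₂ : (Fin d → ℝ) → ℂ}
    {M M₁ M₂ B B₁ B₂ : Matrix (Fin d) (Fin d) ℝ} (hB : B₂ * B₁ = B)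
    (hM : ∀ ξ, ξ ⬝ᵥ M *ᵥ ξ = ξ ⬝ᵥ M₁ *ᵥ ξ + (B₁ *ᵥ ξ) ⬝ᵥ M₂ *ᵥ (B₁ *ᵥ ξ))
    (hφ : ∀ ξ, φ ξ = φ₁ ξ * φ₂ (B₁ *ᵥ ξ)) (f : (Fin d → ℝ) → ℂ) :
    twistedTransform φ₁ M₁ B₁ (twistedTransform φ₂ M₂ B₂ f) = twistedTransform φ M B f := by
  ext ξ
  simp only [twistedTransform, mulVec_mulVec, hB, hM, hφ, Complex.ofReal_add, mul_add,
    Complex.exp_add]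
  ring

end

/-- The twisted convolution transforms `T̃_t = T̃(φ_t, M_t, exp(tA))` with
`M_t = ∫_0^t (exp(τA))ᵀ N exp(τA) dτ` and `φ_t(ξ) = exp(∫_0^t γ(exp(τA)ξ) dτ)` form a
one-parameter semigroup: `T̃_0 = id` and `T̃_s ∘ T̃_t = T̃_{s+t}`. -/
theorem twistedTransform_semigroup (n : ℕ)
    (A N : Matrix (Fin (2*n)) (Fin (2*n)) ℝ)
    (γ : (Fin (2*n) → ℝ) → ℂ) (hγ : Continuous γ) :
    (∀ f : (Fin (2*n) → ℝ) → ℂ,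
      twistedTransform (phiFun (2*n) A γ 0) (Mmat (2*n) A N 0)
        (NormedSpace.exp ((0:ℝ) • A)) f = f) ∧
    (∀ s t : ℝ, 0 ≤ s → 0 ≤ t → ∀ f : (Fin (2*n) → ℝ) → ℂ,
      twistedTransform (phiFun (2*n) A γ s) (Mmat (2*n) A N s)
          (NormedSpace.exp (s • A))
        (twistedTransform (phiFun (2*n) A γ t) (Mmat (2*n) A N t)
          (NormedSpace.exp (t • A)) f) =
      twistedTransform (phiFun (2*n) A γ (s + t)) (Mmat (2*n) A N (s + t))
        (NormedSpace.exp ((s + t) • A)) f) := by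
  refine ⟨fun f => ?_, fun s t _ _ f => ?_⟩
  · rw [zero_smul, NormedSpace.exp_zero, Mmat_zero, phiFun_zero, twistedTransform_one_zero_one]
  · exact twistedTransform_twistedTransform (A.exp_add_smul s t).symm
      (dotProduct_Mmat_mulVec_add A N s t) (phiFun_add A hγ s t) f
end
end

section
/- Let A be a real 2n×2n matrix, N a real 2n×2n matrix, and γ : ℝ^{2n} → ℂ continuous. Set M_t = ∫_0^t (exp(τA))ᵀ · N · exp(τA) dτ and φ_t(ξ) = exp(∫_0^t γ(exp(τA)·ξ) dτ). Let f : ℝ^{2n} → ℂ be (Fréchet) differentiable and define Ψ(t,ξ) = f(exp(tA)·ξ)·exp(−(1/2)·ξᵀM_tξ)·φ_t(ξ). Then for every ξ ∈ ℝ^{2n}, the map t ↦ Ψ(t,ξ) has derivative at t = 0 equal to (Df)(ξ)(Aξ) + (−(1/2)·ξᵀNξ + γ(ξ))·f(ξ), where (Df)(ξ) denotes the Fréchet derivative of f at ξ applied as a linear map. -/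
noncomputable section
open Matrix
open scoped ComplexOrder

attribute [local instance] Matrix.linftyOpNormedRing Matrix.linftyOpNormedAlgebra

section Aux

variable {d : ℕ}

lemma exp_smul_continuous (A : Matrix (Fin d) (Fin d) ℝ) :
    Continuous fun τ : ℝ => NormedSpace.exp (τ • A) :=
  NormedSpace.exp_continuous.comp (continuous_id.smul continuous_const)

lemma hasDerivAt_exp_mulVec (A : Matrix (Fin d) (Fin d) ℝ) (ξ : Fin d → ℝ) :
    HasDerivAt (fun t : ℝ => (NormedSpace.exp (t • A)).mulVec ξ) (A.mulVec ξ) 0 := by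
  have h1 : HasDerivAt (fun t : ℝ => NormedSpace.exp (t • A)) A 0 := by
    have h := hasDerivAt_exp_smul_const A (0 : ℝ)
    simp only [zero_smul, NormedSpace.exp_zero, one_mul] at h
    exact h
  let L : Matrix (Fin d) (Fin d) ℝ →ₗ[ℝ] (Fin d → ℝ) :=
    { toFun := fun M => M.mulVec ξ
      map_add' := fun M M' => Matrix.add_mulVec M M' ξ
      map_smul' := fun c M => Matrix.smul_mulVec c M ξ }
  have hL := (L.toContinuousLinearMap.hasFDerivAt
    (x := NormedSpace.exp ((0:ℝ) • A))).comp_hasDerivAt 0 h1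
  exact hL

end Aux

/-- Derivative at `t = 0` of `Ψ(t,ξ) = f(exp(tA)ξ) · exp(-(1/2) ξᵀ M_t ξ) · φ_t(ξ)`:
it equals `(Df)(ξ)(Aξ) + (-(1/2) ξᵀNξ + γ(ξ)) · f(ξ)`. -/
theorem generator_at_zero (n : ℕ)
    (A N : Matrix (Fin (2*n)) (Fin (2*n)) ℝ)
    (γ : (Fin (2*n) → ℝ) → ℂ) (hγ : Continuous γ)
    (f : (Fin (2*n) → ℝ) → ℂ) (hf : Differentiable ℝ f)
    (ξ : Fin (2*n) → ℝ) :
    HasDerivAt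
      (fun t : ℝ => f ((NormedSpace.exp (t • A)).mulVec ξ) *
        Complex.exp (-(1/2 : ℂ) * ((ξ ⬝ᵥ (Mmat (2*n) A N t).mulVec ξ : ℝ) : ℂ)) *
        phiFun (2*n) A γ t ξ)
      (fderiv ℝ f ξ (A.mulVec ξ) +
        (-(1/2 : ℂ) * ((ξ ⬝ᵥ N.mulVec ξ : ℝ) : ℂ) + γ ξ) * f ξ)
      0 := by
  have hexp : Continuous fun τ : ℝ => NormedSpace.exp (τ • A) := exp_smul_continuous A
  -- first factor
  have hc0 : ((NormedSpace.exp ((0:ℝ) • A)).mulVec ξ) = ξ := by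
    simp [NormedSpace.exp_zero]
  have h1 : HasDerivAt (fun t : ℝ => f ((NormedSpace.exp (t • A)).mulVec ξ))
      (fderiv ℝ f ξ (A.mulVec ξ)) 0 := by
    have hfd : HasFDerivAt f (fderiv ℝ f ξ) ((NormedSpace.exp ((0:ℝ) • A)).mulVec ξ) := by
      rw [hc0]; exact (hf ξ).hasFDerivAt
    exact hfd.comp_hasDerivAt 0 (hasDerivAt_exp_mulVec A ξ)
  -- the matrix-quadratic-form scalar
  set B : ℝ → Matrix (Fin (2*n)) (Fin (2*n)) ℝ :=
    fun τ => (NormedSpace.exp (τ • A))ᵀ * N * NormedSpace.exp (τ • A) with hBdef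
  have hB : Continuous B :=
    (hexp.matrix_transpose.matrix_mul continuous_const).matrix_mul hexp
  have hg : Continuous fun τ => ξ ⬝ᵥ (B τ).mulVec ξ :=
    continuous_const.dotProduct (hB.matrix_mulVec continuous_const)
  have hS : ∀ t : ℝ, ξ ⬝ᵥ (Mmat (2*n) A N t).mulVec ξ = ∫ τ in (0:ℝ)..t, ξ ⬝ᵥ (B τ).mulVec ξ := by
    intro t
    have h1' : (∫ τ in (0:ℝ)..t, ξ ⬝ᵥ (B τ).mulVec ξ)
        = ∑ i, ∑ j, ξ i * ((∫ τ in (0:ℝ)..t, B τ i j) * ξ j) := by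
      rw [intervalIntegral.integral_congr (g := fun τ => ∑ i, ∑ j, ξ i * (B τ i j * ξ j))
        (fun τ _ => by simp [dotProduct, Matrix.mulVec, Finset.mul_sum])]
      rw [intervalIntegral.integral_finset_sum (f := fun i τ => ∑ j, ξ i * (B τ i j * ξ j)) (fun i _ =>
        (continuous_finset_sum _ (fun j _ =>
          (continuous_const.mul ((hB.matrix_elem i j).mul continuous_const)))).intervalIntegrable
            _ _)]
      refine Finset.sum_congr rfl fun i _ => ?_
      rw [intervalIntegral.integral_finset_sum (f := fun j τ => ξ i * (B τ i j * ξ j)) (fun j _ =>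
        ((continuous_const.mul ((hB.matrix_elem i j).mul continuous_const)).intervalIntegrable
            _ _))]
      refine Finset.sum_congr rfl fun j _ => ?_
      rw [intervalIntegral.integral_const_mul, intervalIntegral.integral_mul_const]
    rw [h1']
    simp [Mmat, dotProduct, Matrix.mulVec, Finset.mul_sum, hBdef]
  have hSd : HasDerivAt (fun t : ℝ => ξ ⬝ᵥ (Mmat (2*n) A N t).mulVec ξ) (ξ ⬝ᵥ N.mulVec ξ) 0 := by
    have h0 : (fun τ : ℝ => ξ ⬝ᵥ (B τ).mulVec ξ) 0 = ξ ⬝ᵥ N.mulVec ξ := by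
      simp [hBdef, NormedSpace.exp_zero]
    have hd := intervalIntegral.integral_hasDerivAt_right (f := fun τ => ξ ⬝ᵥ (B τ).mulVec ξ)
      (hg.intervalIntegrable 0 0) (hg.stronglyMeasurableAtFilter _ _) hg.continuousAt
    rw [show ξ ⬝ᵥ (B 0).mulVec ξ = ξ ⬝ᵥ N.mulVec ξ from h0] at hd
    rw [show (fun t : ℝ => ξ ⬝ᵥ (Mmat (2*n) A N t).mulVec ξ)
        = (fun t : ℝ => ∫ τ in (0:ℝ)..t, ξ ⬝ᵥ (B τ).mulVec ξ) from funext hS]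
    exact hd
  have hS0 : ξ ⬝ᵥ (Mmat (2*n) A N 0).mulVec ξ = 0 := by
    rw [hS]; simp
  -- second factor
  have h2 : HasDerivAt
      (fun t : ℝ => Complex.exp (-(1/2 : ℂ) * ((ξ ⬝ᵥ (Mmat (2*n) A N t).mulVec ξ : ℝ) : ℂ)))
      (-(1/2 : ℂ) * ((ξ ⬝ᵥ N.mulVec ξ : ℝ) : ℂ)) 0 := by
    have := ((hSd.ofReal_comp).const_mul (-(1/2 : ℂ))).cexp
    simpa [hS0] using this
  -- third factor
  have hγc : Continuous fun τ : ℝ => γ ((NormedSpace.exp (τ • A)).mulVec ξ) :=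
    hγ.comp (hexp.matrix_mulVec continuous_const)
  have hI : HasDerivAt
      (fun t : ℝ => ∫ τ in (0:ℝ)..t, γ ((NormedSpace.exp (τ • A)).mulVec ξ)) (γ ξ) 0 := by
    have := intervalIntegral.integral_hasDerivAt_right
      (hγc.intervalIntegrable 0 0) (hγc.stronglyMeasurableAtFilter _ _) hγc.continuousAt
    simpa [hc0] using this
  have h3 : HasDerivAt (fun t : ℝ => phiFun (2*n) A γ t ξ) (γ ξ) 0 := by
    have := hI.cexp
    simpa [phiFun] using this
  have hprod := (h1.mul h2).mul h3
  simp only [Pi.mul_def] at hprod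
  have hphi0 : phiFun (2*n) A γ 0 ξ = 1 := by simp [phiFun]
  rw [hc0, hS0, hphi0] at hprod
  simp only [Complex.ofReal_zero, mul_zero, Complex.exp_zero, mul_one] at hprod
  refine hprod.congr_deriv ?_
  ring
end
end
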